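/- Fix K > 0 and α ∈ (1/2, 1). For every λ > 0 and x > 0 both integrals below are finite and ∫₀^∞ e^{−λt} q*(t,x) dt = ( λ^{α−1}/Γ(α) ) ∫₀^∞ e^{−λs} s^{α−1} q_BS(s,x) ds. -/

import Mathlib

open MeasureTheory Set

/-- Standard normal cumulative distribution function. -/
noncomputable def normCdf (z : ℝ) : ℝ :=
  (Real.sqrt (2 * Real.pi))⁻¹ * ∫ u in Set.Iic z, Real.exp (-u ^ 2 / 2)

/-- The Black–Scholes call price function with strike `K`. -/
noncomputable def qBS (K t y : ℝ) : ℝ :=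
  y * normCdf ((2 * Real.log (y / K) + t) / (2 * Real.sqrt t))
    - K * normCdf ((2 * Real.log (y / K) - t) / (2 * Real.sqrt t))

/-- The time-changed Black–Scholes price
`q*(t,y) = (Γ(α)Γ(1−α))⁻¹ ∫₀¹ s^{α−1}(1−s)^{−α} q_BS(ts,y) ds` for `t > 0`,
with `q*(0,y) = (y−K)₊`. -/
noncomputable def qStar (K α t y : ℝ) : ℝ :=
  if t = 0 then max (y - K) 0
  else (Real.Gamma α * Real.Gamma (1 - α))⁻¹ *
    ∫ s in Set.Ioo (0 : ℝ) 1, s ^ (α - 1) * (1 - s) ^ (-α) * qBS K (t * s) y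

/-!
For `t > 0` the substitution `u = t s` writes `q*(t, x)` as `(Γ(α) Γ(1 - α))⁻¹` times the
convolution of `u ↦ u^(α-1) q_BS(u, x)` with `r ↦ r^(-α)`, both extended by zero to `u ≤ 0`.
Since `e^{-λt} = e^{-λu} e^{-λ(t-u)}`, the weight `e^{-λt}` distributes over the convolution, so
the Laplace transform of `q*` is the product of the Laplace transforms of the two factors; that of
`r^(-α)` is `Γ(1 - α) λ^(α-1)`. All integrals converge because `|q_BS| ≤ |x| + |K|` and `0 < α < 1`.
-/

open Real Function
open scoped Convolution Pointwise

theorem integrable_exp_neg_sq_div_two : Integrable fun u : ℝ => exp (-u ^ 2 / 2) := by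
  simpa only [neg_mul, one_div, inv_mul_eq_div, neg_div] using
    integrable_exp_neg_mul_sq (b := 1 / 2) one_half_pos

theorem integral_exp_neg_sq_div_two : ∫ u : ℝ, exp (-u ^ 2 / 2) = sqrt (2 * π) := by
  simpa only [neg_mul, one_div, inv_mul_eq_div, div_inv_eq_mul, mul_comm π, neg_div] using
    integral_gaussian (1 / 2)

theorem normCdf_nonneg (z : ℝ) : 0 ≤ normCdf z :=
  mul_nonneg (by positivity) (setIntegral_nonneg measurableSet_Iic fun _ _ => (exp_pos _).le)

theorem normCdf_le_one (z : ℝ) : normCdf z ≤ 1 := by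
  rw [normCdf, inv_mul_le_iff₀ (by positivity), mul_one, ← integral_exp_neg_sq_div_two]
  exact setIntegral_le_integral integrable_exp_neg_sq_div_two (.of_forall fun _ => (exp_pos _).le)

theorem monotone_normCdf : Monotone normCdf := fun _ _ hab =>
  mul_le_mul_of_nonneg_left
    (setIntegral_mono_set integrable_exp_neg_sq_div_two.integrableOn
      (.of_forall fun _ => (exp_pos _).le) (Iic_subset_Iic.2 hab).eventuallyLE)
    (by positivity)

theorem abs_qBS_le (K t y : ℝ) : |qBS K t y| ≤ |y| + |K| := by
  have habs (z : ℝ) : |normCdf z| ≤ 1 := by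
    rw [abs_of_nonneg (normCdf_nonneg z)]; exact normCdf_le_one z
  calc |qBS K t y| ≤ |y| * |normCdf _| + |K| * |normCdf _| := by
        rw [qBS, ← abs_mul, ← abs_mul]; exact abs_sub _ _
    _ ≤ |y| * 1 + |K| * 1 := by gcongr <;> exact habs _
    _ = |y| + |K| := by ring

theorem measurable_qBS (K y : ℝ) : Measurable fun t => qBS K t y := by
  have := monotone_normCdf.measurable
  unfold qBS
  fun_prop

section LaplaceConvolution

variable {c : ℝ} {f g : ℝ → ℝ}

theorem convolution_exp_mul (t : ℝ) :
    ((fun u => exp (c * u) * f u) ⋆ fun u => exp (c * u) * g u) t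
      = exp (c * t) * (f ⋆ g) t := by
  simp only [convolution_lsmul, smul_eq_mul, ← integral_const_mul]
  congr 1 with u
  rw [show c * t = c * u + c * (t - u) by ring, exp_add]
  ring

theorem support_convolution_subset_Ioi (hf : support f ⊆ Ioi 0) (hg : support g ⊆ Ioi 0) :
    support (f ⋆ g) ⊆ Ioi 0 :=
  (support_convolution_subset _).trans <| (add_subset_add hf hg).trans <| by
    rintro _ ⟨u, hu, v, hv, rfl⟩
    exact mem_Ioi.2 (add_pos hu hv)

theorem integrableOn_Ioi_exp_mul_convolution (hf : support f ⊆ Ioi 0) (hg : support g ⊆ Ioi 0)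
    (hfi : IntegrableOn (fun u => exp (c * u) * f u) (Ioi 0))
    (hgi : IntegrableOn (fun u => exp (c * u) * g u) (Ioi 0)) :
    IntegrableOn (fun t => exp (c * t) * (f ⋆ g) t) (Ioi 0) ∧
      ∫ t in Ioi 0, exp (c * t) * (f ⋆ g) t
        = (∫ u in Ioi 0, exp (c * u) * f u) * ∫ u in Ioi 0, exp (c * u) * g u := by
  have hsupp {h : ℝ → ℝ} (hh : support h ⊆ Ioi 0) :
      support (fun u => exp (c * u) * h u) ⊆ Ioi 0 :=
    (support_mul_subset_right _ _).trans hh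
  have hIoi {h : ℝ → ℝ} (hh : support h ⊆ Ioi 0) : ∫ u in Ioi 0, h u = ∫ u, h u :=
    setIntegral_eq_integral_of_forall_compl_eq_zero fun _ hu => notMem_support.1 (hu <| hh ·)
  have hfg := support_convolution_subset_Ioi hf hg
  rw [integrableOn_iff_integrable_of_support_subset (hsupp hf)] at hfi
  rw [integrableOn_iff_integrable_of_support_subset (hsupp hg)] at hgi
  rw [integrableOn_iff_integrable_of_support_subset (hsupp hfg), hIoi (hsupp hf), hIoi (hsupp hg),
    hIoi (hsupp hfg)]
  simp only [← convolution_exp_mul]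
  exact ⟨hfi.integrable_convolution _ hgi, integral_convolution _ hfi hgi⟩

end LaplaceConvolution

theorem indicator_rpow_mul_convolution_indicator_rpow (p r : ℝ) (q : ℝ → ℝ) {t : ℝ}
    (ht : 0 < t) :
    ((Ioi 0).indicator (fun u => u ^ p * q u) ⋆ (Ioi 0).indicator fun u => u ^ r) t
      = t ^ (p + r + 1) * ∫ s in Ioo 0 1, s ^ p * (1 - s) ^ r * q (t * s) := by
  have hscale (s : ℝ) :
      (Ioi 0).indicator (fun u => u ^ p * q u) (t * s) •
          (Ioi 0).indicator (fun u => u ^ r) (t - t * s)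
        = t ^ (p + r) * (Ioo 0 1).indicator (fun s => s ^ p * (1 - s) ^ r * q (t * s)) s := by
    by_cases hs : s ∈ Ioo 0 1
    · have hts : t - t * s = t * (1 - s) := by ring
      rw [indicator_of_mem (mem_Ioi.2 (mul_pos ht hs.1)), hts,
        indicator_of_mem (mem_Ioi.2 (mul_pos ht (sub_pos.2 hs.2))),
        indicator_of_mem hs, mul_rpow ht.le hs.1.le, mul_rpow ht.le (sub_pos.2 hs.2).le,
        rpow_add ht, smul_eq_mul]
      ring
    · rw [indicator_of_notMem hs, mul_zero, smul_eq_mul]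
      rcases not_and_or.1 hs with hs | hs
      · rw [indicator_of_notMem (fun h => hs (pos_of_mul_pos_right (mem_Ioi.1 h) ht.le)), zero_mul]
      · refine mul_eq_zero_of_right _ (indicator_of_notMem (fun h => hs ?_) _)
        nlinarith [mem_Ioi.1 h]
  have hsub := Measure.integral_comp_mul_left
    (fun u => (Ioi 0).indicator (fun u => u ^ p * q u) u •
      (Ioi 0).indicator (fun u => u ^ r) (t - u)) t
  simp only [hscale, integral_const_mul, integral_indicator measurableSet_Ioo,
    abs_of_pos (inv_pos.2 ht), smul_eq_mul] at hsub
  simp only [convolution_lsmul, smul_eq_mul, rpow_add_one ht.ne']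
  rw [mul_comm (t ^ (p + r)) t, mul_assoc, hsub, mul_inv_cancel_left₀ ht.ne']

theorem integrableOn_exp_mul_rpow_mul_of_abs_le {c p C : ℝ} {q : ℝ → ℝ} (hc : c < 0)
    (hp : -1 < p) (hq : AEStronglyMeasurable q) (hC : ∀ u, |q u| ≤ C) :
    IntegrableOn (fun u => exp (c * u) * u ^ p * q u) (Ioi 0) := by
  have hdom : IntegrableOn (fun u : ℝ => C * (u ^ p * exp (-(-c) * u ^ (1 : ℝ)))) (Ioi 0) :=
    (integrableOn_rpow_mul_exp_neg_mul_rpow hp one_pos (neg_pos.2 hc)).const_mul C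
  refine hdom.mono' (by fun_prop) ((ae_restrict_mem measurableSet_Ioi).mono fun u hu => ?_)
  have hw : 0 ≤ exp (c * u) * u ^ p :=
    mul_nonneg (exp_pos _).le (rpow_nonneg (mem_Ioi.1 hu).le _)
  rw [neg_neg, rpow_one, norm_mul, norm_of_nonneg hw, Real.norm_eq_abs, mul_comm (u ^ p),
    mul_comm C]
  exact mul_le_mul_of_nonneg_left (hC u) hw

theorem integral_exp_neg_mul_mul_rpow_Ioi {lam a : ℝ} (hlam : 0 < lam) (ha : 0 < a) :
    ∫ u in Ioi 0, exp (-lam * u) * u ^ (a - 1) = Gamma a * lam ^ (-a) := by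
  have h := integral_rpow_mul_exp_neg_mul_Ioi ha hlam
  rw [one_div, inv_rpow hlam.le, ← rpow_neg hlam.le, mul_comm] at h
  rw [← h]
  congr 1 with u
  rw [neg_mul, mul_comm]

theorem qStar_Laplace_transform_general
    (K α : ℝ) (hα : α ∈ Set.Ioo (1 / 2 : ℝ) 1) :
    ∀ lam : ℝ, 0 < lam → ∀ x : ℝ, 0 < x →
      IntegrableOn (fun t => Real.exp (-lam * t) * qStar K α t x) (Set.Ioi (0 : ℝ))
      ∧ IntegrableOn (fun s => Real.exp (-lam * s) * s ^ (α - 1) * qBS K s x)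
          (Set.Ioi (0 : ℝ))
      ∧ ∫ t in Set.Ioi (0 : ℝ), Real.exp (-lam * t) * qStar K α t x
          = lam ^ (α - 1) / Real.Gamma α *
              ∫ s in Set.Ioi (0 : ℝ), Real.exp (-lam * s) * s ^ (α - 1) * qBS K s x := by
  intro lam hlam x _
  set f := (Ioi 0).indicator fun u => u ^ (α - 1) * qBS K u x
  set g := (Ioi 0).indicator fun u : ℝ => u ^ (-α)
  have hqStar : ∀ t ∈ Ioi (0 : ℝ), exp (-lam * t) * qStar K α t x
      = (Gamma α * Gamma (1 - α))⁻¹ * (exp (-lam * t) * (f ⋆ g) t) := fun t ht => by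
    rw [qStar, if_neg (ne_of_gt ht), indicator_rpow_mul_convolution_indicator_rpow _ _ _ ht,
      show α - 1 + -α + 1 = 0 by ring, rpow_zero, one_mul]
    ring
  have hRHS : IntegrableOn (fun s => exp (-lam * s) * s ^ (α - 1) * qBS K s x) (Ioi 0) :=
    integrableOn_exp_mul_rpow_mul_of_abs_le (neg_neg_of_pos hlam) (by linarith [hα.1])
      (measurable_qBS K x).aestronglyMeasurable (abs_qBS_le K · x)
  have hf : EqOn (fun u => exp (-lam * u) * f u)
      (fun s => exp (-lam * s) * s ^ (α - 1) * qBS K s x) (Ioi 0) := fun u hu => by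
    simp only [f, indicator_of_mem hu, mul_assoc]
  have hg : EqOn (fun u => exp (-lam * u) * g u) (fun u => exp (-lam * u) * u ^ (1 - α - 1))
      (Ioi 0) := fun u hu => by
    simp only [g, indicator_of_mem hu, show 1 - α - 1 = -α by ring]
  have hgint := integral_exp_neg_mul_mul_rpow_Ioi hlam (sub_pos.2 hα.2)
  have hΓ₁ : 0 < Gamma (1 - α) := Gamma_pos_of_pos (sub_pos.2 hα.2)
  have hΓ : 0 < Gamma (1 - α) * lam ^ (-(1 - α)) := mul_pos hΓ₁ (rpow_pos_of_pos hlam _)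
  obtain ⟨hconv, hconv_eq⟩ := integrableOn_Ioi_exp_mul_convolution
    support_indicator_subset support_indicator_subset (hRHS.congr_fun hf.symm measurableSet_Ioi)
    (IntegrableOn.congr_fun (.of_integral_ne_zero (hgint ▸ hΓ.ne')) hg.symm measurableSet_Ioi)
  refine ⟨IntegrableOn.congr_fun (hconv.const_mul _) (fun t ht => (hqStar t ht).symm)
    measurableSet_Ioi, hRHS, ?_⟩
  rw [setIntegral_congr_fun measurableSet_Ioi hqStar, integral_const_mul, hconv_eq,
    setIntegral_congr_fun measurableSet_Ioi hf, setIntegral_congr_fun measurableSet_Ioi hg, hgint,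
    neg_sub]
  field_simp [hΓ₁.ne']

/-- For every `λ > 0` and `x > 0`, both Laplace-type integrals are
finite and `∫₀^∞ e^{−λt} q*(t,x) dt = (λ^{α−1}/Γ(α)) ∫₀^∞ e^{−λs} s^{α−1} q_BS(s,x) ds`. -/
theorem qStar_Laplace_transform
    (K α : ℝ) (hK : 0 < K) (hα : α ∈ Set.Ioo (1 / 2 : ℝ) 1) :
    ∀ lam : ℝ, 0 < lam → ∀ x : ℝ, 0 < x →
      IntegrableOn (fun t => Real.exp (-lam * t) * qStar K α t x) (Set.Ioi (0 : ℝ))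
      ∧ IntegrableOn (fun s => Real.exp (-lam * s) * s ^ (α - 1) * qBS K s x)
          (Set.Ioi (0 : ℝ))
      ∧ ∫ t in Set.Ioi (0 : ℝ), Real.exp (-lam * t) * qStar K α t x
          = lam ^ (α - 1) / Real.Gamma α *
              ∫ s in Set.Ioi (0 : ℝ), Real.exp (-lam * s) * s ^ (α - 1) * qBS K s x :=
  qStar_Laplace_transform_general K α hα
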